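/- With F obtained from F̃ by right composition with a 2×2 real matrix T (F^i_{mnp} = Σ F̃^i_{m̃ñp̃} T^m̃_m T^ñ_n T^p̃_p), one has G_{1222}(F) = det(T) · ω̃[5](z¹,z²,z³,z⁴) where z¹ = T¹₁, z² = T²₁, z³ = T¹₂, z⁴ = T²₂ and ω̃[5] = 2G̃_{1111}z¹(z³)³ + G̃_{1112}z²(z³)³ + 3G̃_{1112}z¹(z³)²z⁴ + (3G̃_{1212}+G̃_{1122})z²(z³)²z⁴ + (3G̃_{1212}+G̃_{1122})z¹z³(z⁴)² + 3G̃_{1222}z²z³(z⁴)² + G̃_{1222}z¹(z⁴)³ + 2G̃_{2222}z²(z⁴)³. -/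
import Mathlib


/-- A cubic coefficient array on ℝ²: one upper index, three lower indices in {1,2}. -/
abbrev CubicTensor := Fin 2 → Fin 2 → Fin 2 → Fin 2 → ℝ

/-- Symmetry in the three lower indices. -/
def SymLower (F : CubicTensor) : Prop :=
  ∀ i m n p, F i m n p = F i n m p ∧ F i m n p = F i m p n

def G1111 (F : CubicTensor) : ℝ := F 0 0 0 0 * F 1 0 0 1 - F 0 0 0 1 * F 1 0 0 0
def G1112 (F : CubicTensor) : ℝ := F 0 0 0 0 * F 1 0 1 1 - F 0 0 1 1 * F 1 0 0 0
def G1122 (F : CubicTensor) : ℝ := F 0 0 0 0 * F 1 1 1 1 - F 0 1 1 1 * F 1 0 0 0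
def G1212 (F : CubicTensor) : ℝ := F 0 0 0 1 * F 1 0 1 1 - F 0 0 1 1 * F 1 0 0 1
def G1222 (F : CubicTensor) : ℝ := F 0 0 0 1 * F 1 1 1 1 - F 0 1 1 1 * F 1 0 0 1
def G2222 (F : CubicTensor) : ℝ := F 0 0 1 1 * F 1 1 1 1 - F 0 1 1 1 * F 1 0 1 1

/-- The quartic form ω[5] built from the determinants of F. -/
def omega5 (F : CubicTensor) (z1 z2 z3 z4 : ℝ) : ℝ :=
  2 * G1111 F * z1 * z3^3 + G1112 F * z2 * z3^3 + 3 * G1112 F * z1 * z3^2 * z4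
    + (3 * G1212 F + G1122 F) * z2 * z3^2 * z4
    + (3 * G1212 F + G1122 F) * z1 * z3 * z4^2
    + 3 * G1222 F * z2 * z3 * z4^2 + G1222 F * z1 * z4^3 + 2 * G2222 F * z2 * z4^3

theorem right_composition_G1222 (F Ft : CubicTensor) (T : Matrix (Fin 2) (Fin 2) ℝ)
    (hFt : SymLower Ft) (hT : IsUnit T.det)
    (hrel : ∀ i m n p, F i m n p =
      ∑ mt : Fin 2, ∑ nt : Fin 2, ∑ pt : Fin 2,
        Ft i mt nt pt * T mt m * T nt n * T pt p) :
    G1222 F = T.det * omega5 Ft (T 0 0) (T 1 0) (T 0 1) (T 1 1) := by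

  have h001 : Ft 0 0 0 1 = Ft 0 0 1 0 := (hFt 0 0 0 1).2
  have h010 : Ft 0 0 1 0 = Ft 0 1 0 0 := (hFt 0 0 1 0).1
  have h011 : Ft 0 0 1 1 = Ft 0 1 0 1 := (hFt 0 0 1 1).1
  have h110 : Ft 0 1 1 0 = Ft 0 1 0 1 := (hFt 0 1 1 0).2
  have g001 : Ft 1 0 0 1 = Ft 1 0 1 0 := (hFt 1 0 0 1).2
  have g010 : Ft 1 0 1 0 = Ft 1 1 0 0 := (hFt 1 0 1 0).1
  have g011 : Ft 1 0 1 1 = Ft 1 1 0 1 := (hFt 1 0 1 1).1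
  have g110 : Ft 1 1 1 0 = Ft 1 1 0 1 := (hFt 1 1 1 0).2
  simp only [G1222, omega5, G1111, G1112, G1122, G1212, G2222, hrel,
    Fin.sum_univ_two, Matrix.det_fin_two]
  rw [h001, h010, h011, h110, g001, g010, g011, g110]
  ring
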